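/- Combining the previous two facts (Proposition 1 of SEEDS): if A_n and A_k are disjoint finite pixel sets, L ⊆ A_k is nonempty with all pixels colored in a single bin H⋆, and |A_n| = |A_k \ L| > 0, then int(c_{A_n}, c_L) ≥ int(c_{A_k\L}, c_L) if and only if the unnormalized sum-of-squares energy after moving L to A_n is ≥ the energy before the move. -/

import Mathlib

/-- Unnormalized color histogram of a finite pixel set. -/
def hist {Pixel : Type*} [DecidableEq Pixel] {m : ℕ} (color : Pixel → Fin m)
    (S : Finset Pixel) (j : Fin m) : ℕ :=
  (S.filter (fun i => color i = j)).card

/-- Normalized color histogram of a finite pixel set. -/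
noncomputable def nhist {Pixel : Type*} [DecidableEq Pixel] {m : ℕ} (color : Pixel → Fin m)
    (S : Finset Pixel) (j : Fin m) : ℝ :=
  (hist color S j : ℝ) / (S.card : ℝ)

/-!
Both sides reduce to `h_{A_k \ L}(c) ≤ h_{A_n}(c)`, where `c` is the color of `L`. Since `c_L` is
the indicator of `c`, `int(c_S, c_L) = c_S(c)`, and `A_n`, `A_k \ L` have the same size. Adding
the monochrome `L` to a disjoint set `S` only changes bin `c`, raising the energy by
`2 h_S(c) |L| + |L|²`; so the move changes the total energy by
`2 |L| (h_{A_n}(c) - h_{A_k \ L}(c))`.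
-/

section

open Finset

variable {Pixel : Type*} [DecidableEq Pixel] {m : ℕ} (color : Pixel → Fin m)

lemma hist_union {S T : Finset Pixel} (h : Disjoint S T) (j : Fin m) :
    hist color (S ∪ T) j = hist color S j + hist color T j := by
  rw [hist, filter_union, card_union_of_disjoint (disjoint_filter_filter h)]; rfl

lemma hist_le_card (S : Finset Pixel) (j : Fin m) : hist color S j ≤ S.card :=
  card_filter_le _ _

lemma hist_of_forall_color_eq {L : Finset Pixel} {c : Fin m} (hcol : ∀ i ∈ L, color i = c)
    (j : Fin m) : hist color L j = if j = c then L.card else 0 := by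
  unfold hist
  split_ifs with h
  · exact congrArg card (filter_true_of_mem fun i hi => (hcol i hi).trans h.symm)
  · exact card_eq_zero.mpr (filter_false_of_mem fun i hi hj => h (hj ▸ hcol i hi))

lemma nhist_nonneg (S : Finset Pixel) (j : Fin m) : 0 ≤ nhist color S j := by
  unfold nhist; positivity

lemma nhist_le_one (S : Finset Pixel) (j : Fin m) : nhist color S j ≤ 1 :=
  div_le_one_of_le₀ (by exact_mod_cast hist_le_card color S j) (Nat.cast_nonneg _)

lemma nhist_of_forall_color_eq {L : Finset Pixel} (hL : L.Nonempty) {c : Fin m}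
    (hcol : ∀ i ∈ L, color i = c) (j : Fin m) :
    nhist color L j = if j = c then 1 else 0 := by
  rw [nhist, hist_of_forall_color_eq color hcol]
  split_ifs
  · exact div_self (by exact_mod_cast hL.card_pos.ne')
  · simp

lemma sum_min_nhist_of_forall_color_eq (S : Finset Pixel) {L : Finset Pixel} (hL : L.Nonempty)
    {c : Fin m} (hcol : ∀ i ∈ L, color i = c) :
    ∑ j, min (nhist color S j) (nhist color L j) = nhist color S c := by
  simp_rw [nhist_of_forall_color_eq color hL hcol, apply_ite (min _), min_eq_left
    (nhist_le_one color S _), min_eq_right (nhist_nonneg color S _)]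
  simp

lemma nhist_le_nhist_iff_of_card_eq {S T : Finset Pixel} (h : S.card = T.card) (j : Fin m) :
    nhist color S j ≤ nhist color T j ↔ hist color S j ≤ hist color T j := by
  rcases S.eq_empty_or_nonempty with rfl | hS
  · obtain rfl : T = ∅ := card_eq_zero.mp h.symm
    simp
  rw [nhist, nhist, ← h, div_le_div_iff_of_pos_right (by exact_mod_cast hS.card_pos),
    Nat.cast_le]

lemma sum_sq_hist_union_of_forall_color_eq {S L : Finset Pixel} (h : Disjoint S L) {c : Fin m}
    (hcol : ∀ i ∈ L, color i = c) :
    ∑ j, hist color (S ∪ L) j ^ 2 =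
      ∑ j, hist color S j ^ 2 + 2 * hist color S c * L.card + L.card ^ 2 := by
  simp_rw [hist_union color h, hist_of_forall_color_eq color hcol, add_sq, sum_add_distrib]
  simp [apply_ite (· ^ 2), mul_assoc]

end

theorem stmt8_general {Pixel : Type*} [DecidableEq Pixel] (m : ℕ) (color : Pixel → Fin m)
    (Ak An L : Finset Pixel) (Hstar : Fin m)
    (hd : Disjoint An Ak) (hL : L ⊆ Ak) (hLne : L.Nonempty)
    (hcol : ∀ i ∈ L, color i = Hstar)
    (hZ : An.card = (Ak \ L).card) :
    (∑ j, min (nhist color (Ak \ L) j) (nhist color L j)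
       ≤ ∑ j, min (nhist color An j) (nhist color L j))
    ↔ (∑ j, (hist color An j)^2 + ∑ j, (hist color Ak j)^2
        ≤ ∑ j, (hist color (An ∪ L) j)^2 + ∑ j, (hist color (Ak \ L) j)^2) := by
  have energy_Ak : ∑ j, hist color Ak j ^ 2 = ∑ j, hist color (Ak \ L) j ^ 2
      + 2 * hist color (Ak \ L) Hstar * L.card + L.card ^ 2 := by
    rw [← sum_sq_hist_union_of_forall_color_eq color Finset.sdiff_disjoint hcol,
      Finset.sdiff_union_of_subset hL]
  rw [sum_min_nhist_of_forall_color_eq color _ hLne hcol,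
    sum_min_nhist_of_forall_color_eq color _ hLne hcol,
    nhist_le_nhist_iff_of_card_eq color hZ.symm, energy_Ak,
    sum_sq_hist_union_of_forall_color_eq color (hd.mono_right hL) hcol]
  have hLpos := hLne.card_pos
  constructor <;> intro h <;> nlinarith

theorem stmt8 {Pixel : Type*} [DecidableEq Pixel] (m : ℕ) (color : Pixel → Fin m)
    (Ak An L : Finset Pixel) (Hstar : Fin m)
    (hd : Disjoint An Ak) (hL : L ⊆ Ak) (hLne : L.Nonempty)
    (hcol : ∀ i ∈ L, color i = Hstar)
    (hZ : An.card = (Ak \ L).card) (hZpos : 0 < An.card) :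
    (∑ j, min (nhist color (Ak \ L) j) (nhist color L j)
       ≤ ∑ j, min (nhist color An j) (nhist color L j))
    ↔ (∑ j, (hist color An j)^2 + ∑ j, (hist color Ak j)^2
        ≤ ∑ j, (hist color (An ∪ L) j)^2 + ∑ j, (hist color (Ak \ L) j)^2) :=
  stmt8_general m color Ak An L Hstar hd hL hLne hcol hZ
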